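/- Let d ≥ 1 and let f_0, …, f_d be tropical polynomials in n variables. Define the piecewise-linear (in general non-convex) function y : ℝ^n → ℝ by y(x) = min_{1 ≤ i ≤ d} (f_{d−i}(x) − f_d(x))/i, i.e. y = ⊕_{1 ≤ i ≤ d} (f_{d−i} ⊘ f_d)^{⊗(1/i)} where ⊘ denotes tropical division (classical subtraction). Then: (a) for every x ∈ ℝ^n the minimum of the d+1 values f_i(x) + i·y(x), 0 ≤ i ≤ d, is attained for at least two distinct indices i (so y is a resolution of f = ⊕_{i=0}^d f_i ⊗ y^{⊗i} by a tropical Newton–Puiseux rational function); and (b) y is minimal: for every x ∈ ℝ^n, y(x) = min{ y_0 ∈ ℝ : the minimum of f_i(x) + i·y_0 over 0 ≤ i ≤ d is attained for at least two distinct indices i }. -/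
import Mathlib


open Finset

/-- A tropical polynomial in `n` variables: a finite nonempty family of monomials
`(c, J)` with real coefficient `c` and exponent `J ∈ ℕ^n`.  It defines the convex
piecewise-linear function `x ↦ min_J (c_J + ⟨J, x⟩)`. -/
structure TropPoly (n : ℕ) where
  monos : Finset (ℝ × (Fin n → ℕ))
  ne : monos.Nonempty

/-- The convex piecewise-linear function defined by a tropical polynomial. -/
noncomputable def TropPoly.eval {n : ℕ} (f : TropPoly n) (x : Fin n → ℝ) : ℝ :=
  f.monos.inf' f.ne fun p => p.1 + ∑ j, (p.2 j : ℝ) * x j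

/-- A tropical Newton–Puiseux polynomial in `n` variables: a finite nonempty family of
monomials `(a, I)` with rational coefficient `a` and exponent `I ∈ ℚ^n`. -/
structure NPPoly (n : ℕ) where
  monos : Finset (ℚ × (Fin n → ℚ))
  ne : monos.Nonempty

/-- The convex piecewise-linear function defined by a tropical Newton–Puiseux polynomial. -/
noncomputable def NPPoly.eval {n : ℕ} (y : NPPoly n) (x : Fin n → ℝ) : ℝ :=
  y.monos.inf' y.ne fun p => (p.1 : ℝ) + ∑ j, (p.2 j : ℝ) * x j

/-- The value of the term `f_i ⊗ y^{⊗ i}` of `f = ⊕_{i=0}^d f_i ⊗ y^{⊗ i}` at the point `x`,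
when the indeterminate `y` has the value `y0`. -/
noncomputable def termVal {n d : ℕ} (f : Fin (d+1) → TropPoly n) (x : Fin n → ℝ) (y0 : ℝ)
    (i : Fin (d+1)) : ℝ :=
  (f i).eval x + (i : ℕ) * y0

/-- At the point `x`, with value `y0` substituted for the indeterminate, the minimum of the
`d+1` values `f_i(x) + i·y0` is attained for at least two distinct indices `i`. -/
def TiesAt {n d : ℕ} (f : Fin (d+1) → TropPoly n) (x : Fin n → ℝ) (y0 : ℝ) : Prop :=
  ∃ i₁ i₂ : Fin (d+1), i₁ ≠ i₂ ∧ termVal f x y0 i₁ = termVal f x y0 i₂ ∧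
    ∀ i, termVal f x y0 i₁ ≤ termVal f x y0 i

/-- A function `y : ℝ^n → ℝ` is a resolution of `f = ⊕_{i=0}^d f_i ⊗ y^{⊗ i}` if at every
point `x` the minimum of the `d+1` values `f_i(x) + i·y(x)` is attained for at least two
distinct indices. -/
def IsResolution {n d : ℕ} (f : Fin (d+1) → TropPoly n) (y : (Fin n → ℝ) → ℝ) : Prop :=
  ∀ x, TiesAt f x (y x)

/-- The piecewise-linear (in general non-convex) function
`y(x) = min_{1 ≤ i ≤ d} (f_{d-i}(x) - f_d(x)) / i`, written here as the minimum over
`j = d - i` ranging over `0, ..., d-1` of `(f_j(x) - f_d(x)) / (d - j)`; tropically this is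
the Newton-Puiseux rational function `⊕_{1 ≤ i ≤ d} (f_{d-i} ⊘ f_d)^{⊗(1/i)}`. -/
noncomputable def ratCandidate {n d : ℕ} (f : Fin (d+1) → TropPoly n) (hd : 0 < d)
    (x : Fin n → ℝ) : ℝ :=
  (Finset.univ : Finset (Fin d)).inf' ⟨⟨0, hd⟩, Finset.mem_univ _⟩
    fun j => ((f j.castSucc).eval x - (f (Fin.last d)).eval x) / ((d : ℝ) - (j : ℕ))

/-- The function `y(x) = min_{1 ≤ i ≤ d} (f_{d-i}(x) - f_d(x)) / i` is a resolution of
`f = ⊕_{i=0}^d f_i ⊗ y^{⊗ i}` (by a tropical Newton-Puiseux rational function), and it is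
pointwise minimal: at every `x`, `y(x)` is the least real number `y0` such that the minimum
of the `d+1` values `f_i(x) + i·y0` is attained for at least two distinct indices. -/
theorem ratCandidate_isResolution_and_minimal {n d : ℕ} (hd : 0 < d)
    (f : Fin (d+1) → TropPoly n) :
    IsResolution f (ratCandidate f hd) ∧
      ∀ x, IsLeast {y0 : ℝ | TiesAt f x y0} (ratCandidate f hd x) := by
  have key : ∀ x, IsLeast {y0 : ℝ | TiesAt f x y0} (ratCandidate f hd x) := by
    intro x
    set A : Fin (d+1) → ℝ := fun i => (f i).eval x with hA
    set y : ℝ := ratCandidate f hd x with hy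
    have hpos : ∀ j : Fin d, (0:ℝ) < (d:ℝ) - (j:ℕ) := by
      intro j
      have := j.isLt
      have : ((j:ℕ):ℝ) < (d:ℝ) := by exact_mod_cast this
      linarith
    have hle : ∀ j : Fin d, y ≤ (A j.castSucc - A (Fin.last d)) / ((d:ℝ) - (j:ℕ)) := by
      intro j
      exact Finset.inf'_le _ (Finset.mem_univ j)
    obtain ⟨j₀, -, hj₀⟩ := Finset.exists_mem_eq_inf'
      (⟨⟨0, hd⟩, Finset.mem_univ _⟩ : (Finset.univ : Finset (Fin d)).Nonempty)
      (fun j : Fin d => (A j.castSucc - A (Fin.last d)) / ((d:ℝ) - (j:ℕ)))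
    have hyj : y = (A j₀.castSucc - A (Fin.last d)) / ((d:ℝ) - (j₀:ℕ)) := hj₀
    have hyj' : y * ((d:ℝ) - (j₀:ℕ)) = A j₀.castSucc - A (Fin.last d) := by
      rw [hyj]; field_simp [(hpos j₀).ne']
    -- the value at last index is minimal among all terms
    have hlast_min : ∀ i, termVal f x y (Fin.last d) ≤ termVal f x y i := by
      intro i
      induction i using Fin.lastCases with
      | last => exact le_refl _
      | cast j =>
        have h1 := (le_div_iff₀ (hpos j)).mp (hle j)
        simp only [termVal, Fin.val_last, Fin.coe_castSucc]
        show (A (Fin.last d)) + (d:ℕ) * y ≤ A j.castSucc + (j:ℕ) * y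
        push_cast
        nlinarith [h1]
    have heq : termVal f x y (j₀.castSucc) = termVal f x y (Fin.last d) := by
      simp only [termVal, Fin.val_last, Fin.coe_castSucc]
      show A j₀.castSucc + (j₀:ℕ) * y = A (Fin.last d) + (d:ℕ) * y
      push_cast
      nlinarith [hyj']
    constructor
    · refine ⟨j₀.castSucc, Fin.last d, ne_of_lt (Fin.castSucc_lt_last j₀), heq, ?_⟩
      intro i
      rw [heq]; exact hlast_min i
    · rintro y0 ⟨i₁, i₂, hne, heq2, hmin⟩
      -- find an index j < d whose term is minimal
      have hj : ∃ j : Fin d, ∀ i, termVal f x y0 j.castSucc ≤ termVal f x y0 i := by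
        by_cases h1 : (i₁ : ℕ) < d
        · exact ⟨⟨i₁, h1⟩, by
            have : (⟨(i₁:ℕ), h1⟩ : Fin d).castSucc = i₁ := by
              apply Fin.ext; simp
            rw [this]; exact hmin⟩
        · have hi1 : i₁ = Fin.last d := by
            apply Fin.ext
            have := i₁.isLt
            simp [Fin.val_last]; omega
          have h2 : (i₂ : ℕ) < d := by
            have := i₂.isLt
            rcases Nat.lt_or_ge (i₂ : ℕ) d with h | h
            · exact h
            · exfalso; apply hne
              apply Fin.ext
              rw [hi1]; simp [Fin.val_last]; omega
          exact ⟨⟨i₂, h2⟩, by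
            have : (⟨(i₂:ℕ), h2⟩ : Fin d).castSucc = i₂ := by
              apply Fin.ext; simp
            rw [this, ← heq2]; exact hmin⟩
      obtain ⟨j, hjmin⟩ := hj
      have hterm : termVal f x y0 j.castSucc ≤ termVal f x y0 (Fin.last d) := hjmin _
      have hq : (A j.castSucc - A (Fin.last d)) / ((d:ℝ) - (j:ℕ)) ≤ y0 := by
        rw [div_le_iff₀ (hpos j)]
        simp only [termVal, Fin.val_last, Fin.coe_castSucc] at hterm
        have : A j.castSucc + ((j:ℕ):ℝ) * y0 ≤ A (Fin.last d) + ((d:ℕ):ℝ) * y0 := by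
          exact_mod_cast hterm
        push_cast at this ⊢
        nlinarith [this]
      exact le_trans (hle j) hq
  exact ⟨fun x => (key x).1, key⟩
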